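/- arXiv:math/0206256 — 2 statements merged into one kernel-verified Lean document; each statement's English description precedes it below -/
import Mathlib

section
/- Let V be a finite-dimensional k-vector space and g a linear automorphism of V of finite order invertible in k with V^g = 0. Then the Koszul complex of the section s'(v) = v − g⁻¹(v) of the trivial bundle with fiber V over the affine space V is a resolution of the one-dimensional module k (supported at the origin); i.e., its homology is k in degree 0 and vanishes in positive degrees. -/
/-!
Since `V^g = 0`, the map `1 - g⁻¹` is a linear automorphism of `V`, so the components of `s'`
are the coordinate functions of another linear coordinate system on `V`. The corresponding
automorphism of `k[V]` sends `X` to `s'` and fixes evaluation at the origin, hence identifies the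
Koszul complex of `s'` with the Koszul complex of the coordinates `X`, together with its
augmentation. The latter is exact over any coefficient ring, by an explicit contracting homotopy:
on `x^α e_S`, let `m` be the least index occurring in `α` or in `S`; the homotopy kills the
monomial if `m ∈ S` and sends it to `x^(α - e_m) e_(S ∪ {m})` otherwise.
-/

open MvPolynomial

variable (k : Type*) [Field k] (n : ℕ)

/-- The coordinate ring `k[V]` of the affine space `V = k^n`. -/
abbrev KRing' := MvPolynomial (Fin n) k

/-- The `i`-th component of the section `s'(v) = v − g⁻¹(v)` of the trivial bundle
with fiber `V` over `V`, as a (linear) polynomial on `V`. -/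
noncomputable def sectionPoly (g : (Fin n → k) ≃ₗ[k] (Fin n → k)) (i : Fin n) : KRing' k n :=
  X i - ∑ j : Fin n,
    C (LinearMap.toMatrix (Pi.basisFun k (Fin n)) (Pi.basisFun k (Fin n))
        (g.symm : (Fin n → k) →ₗ[k] (Fin n → k)) i j) * X j

/-- The degree-`j` term `k[V] ⊗ Λ^j V*` of the Koszul complex, modelled on the
standard basis of `Λ^j V*`. -/
abbrev KTerm' (j : ℕ) := {S : Finset (Fin n) // S.card = j} →₀ KRing' k n

/-- The Koszul differential: contraction with the section `s'(v) = v − g⁻¹(v)`. -/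
noncomputable def koszulD' (g : (Fin n → k) ≃ₗ[k] (Fin n → k)) (j : ℕ)
    (x : KTerm' k n (j + 1)) : KTerm' k n j :=
  x.sum fun S r =>
    ∑ i ∈ S.val.attach,
      ((-1 : KRing' k n) ^ ((S.val.filter (fun a => a < i.val)).card)) •
        Finsupp.single
          ⟨S.val.erase i.val, by simp [Finset.card_erase_of_mem i.2, S.2]⟩
          (r * sectionPoly k n g i.val)

/-- The augmentation: evaluation at the origin, with values in the
one-dimensional module `k` supported at the origin. -/
noncomputable def koszulAug' (x : KTerm' k n 0) : k :=
  eval (0 : Fin n → k) (x ⟨∅, Finset.card_empty⟩)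

open Finset

section KoszulChain

variable {σ R : Type*}

abbrev KoszulChain (σ R : Type*) [Zero R] (j : ℕ) := {S : Finset σ // S.card = j} →₀ R

lemma KoszulChain.single_congr [Zero R] {j : ℕ} {S T : Finset σ} (hS : S.card = j)
    (hST : S = T) (r : R) :
    (Finsupp.single ⟨S, hS⟩ r : KoszulChain σ R j) = Finsupp.single ⟨T, hST ▸ hS⟩ r := by
  subst hST; rfl

variable [CommRing R]

lemma KoszulChain.addMonoidHom_ext {M : Type*} [AddCommMonoid M] {j : ℕ}
    {f g : KoszulChain σ (MvPolynomial σ R) j →+ M}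
    (h : ∀ S hS α c, f (Finsupp.single ⟨S, hS⟩ (monomial α c))
      = g (Finsupp.single ⟨S, hS⟩ (monomial α c))) : f = g :=
  Finsupp.addHom_ext fun ⟨S, hS⟩ p => by
    induction p using MvPolynomial.induction_on' with
    | monomial α c => exact h S hS α c
    | add p q hp hq => rw [Finsupp.single_add, map_add, map_add, hp, hq]

noncomputable def koszulAug : KoszulChain σ (MvPolynomial σ R) 0 →+ R :=
  (constantCoeff : MvPolynomial σ R →+* R).toAddMonoidHom.comp
    (Finsupp.applyAddHom ⟨∅, card_empty⟩)

theorem koszulAug_surjective : Function.Surjective (koszulAug (σ := σ) (R := R)) := fun c =>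
  ⟨Finsupp.single ⟨∅, card_empty⟩ (C c), by simp [koszulAug]⟩

lemma koszulAug'_eq_koszulAug : koszulAug' k n = koszulAug := by
  ext x
  simp [koszulAug', koszulAug]

end KoszulChain

section KoszulComplex

variable {σ R R' : Type*} [CommRing R] [CommRing R'] [LinearOrder σ]

-- The cardinality of `S` is tested rather than assumed, so that the faces of `S` can be summed
-- over `i ∈ S` without carrying proofs.
noncomputable def koszulFace (t : σ → R) (j : ℕ) (S : Finset σ) (i : σ) : KoszulChain σ R j :=
  if h : i ∈ S ∧ S.card = j + 1 then
    Finsupp.single ⟨S.erase i, by rw [card_erase_of_mem h.1, h.2, Nat.add_sub_cancel]⟩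
      ((-1) ^ #{a ∈ S | a < i} * t i)
  else 0

lemma koszulFace_of_mem (t : σ → R) {j : ℕ} {S : Finset σ} (hS : S.card = j + 1) {i : σ}
    (hi : i ∈ S) :
    koszulFace t j S i = Finsupp.single
      ⟨S.erase i, by rw [card_erase_of_mem hi, hS, Nat.add_sub_cancel]⟩
      ((-1) ^ #{a ∈ S | a < i} * t i) :=
  dif_pos ⟨hi, hS⟩

noncomputable def koszulDiff (t : σ → R) (j : ℕ) :
    KoszulChain σ R (j + 1) →ₗ[R] KoszulChain σ R j :=
  Finsupp.linearCombination R fun S => ∑ i ∈ S.1, koszulFace t j S.1 i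

lemma koszulDiff_single (t : σ → R) {j : ℕ} (S : Finset σ) (hS : S.card = j + 1) (r : R) :
    koszulDiff t j (Finsupp.single ⟨S, hS⟩ r) = r • ∑ i ∈ S, koszulFace t j S i :=
  Finsupp.linearCombination_single R r _

lemma koszulD'_eq_koszulDiff (g : (Fin n → k) ≃ₗ[k] (Fin n → k)) (j : ℕ) :
    koszulD' k n g j = koszulDiff (sectionPoly k n g) j := by
  ext x : 1
  rw [koszulD', koszulDiff, Finsupp.linearCombination_apply]
  refine Finsupp.sum_congr fun S _ => ?_
  rw [smul_sum, ← sum_attach S.1]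
  refine sum_congr rfl fun i _ => ?_
  rw [koszulFace_of_mem _ S.2 i.2, Finsupp.smul_single, Finsupp.smul_single, smul_eq_mul,
    smul_eq_mul, mul_left_comm]

lemma neg_one_pow_filter_lt_erase_add {S : Finset σ} {i i' : σ} (hi' : i' ∈ S) (hlt : i' < i) :
    (-1 : R) ^ #{a ∈ S.erase i | a < i'} * (-1) ^ #{a ∈ S | a < i}
      + (-1) ^ #{a ∈ S.erase i' | a < i} * (-1) ^ #{a ∈ S | a < i'} = 0 := by
  have h₁ : {a ∈ S.erase i | a < i'} = {a ∈ S | a < i'} := by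
    rw [filter_erase, erase_eq_of_notMem]
    exact fun h => (mem_filter.mp h).2.not_gt hlt
  have h₂ : #{a ∈ S.erase i' | a < i} + 1 = #{a ∈ S | a < i} := by
    rw [filter_erase, card_erase_add_one (mem_filter.mpr ⟨hi', hlt⟩)]
  rw [h₁, ← h₂, pow_succ]
  ring

lemma neg_one_pow_filter_erase_add {S : Finset σ} {i i' : σ} (hi : i ∈ S) (hi' : i' ∈ S)
    (hne : i' ≠ i) :
    (-1 : R) ^ #{a ∈ S.erase i | a < i'} * (-1) ^ #{a ∈ S | a < i}
      + (-1) ^ #{a ∈ S.erase i' | a < i} * (-1) ^ #{a ∈ S | a < i'} = 0 := by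
  rcases hne.lt_or_gt with hlt | hlt
  · exact neg_one_pow_filter_lt_erase_add hi' hlt
  · rw [add_comm]
    exact neg_one_pow_filter_lt_erase_add hi hlt

lemma koszulDiff_koszulFace (t : σ → R) {j : ℕ} {S : Finset σ} (hS : S.card = j + 2) {i : σ}
    (hi : i ∈ S) :
    koszulDiff t j (koszulFace t (j + 1) S i) =
      ((-1) ^ #{a ∈ S | a < i} * t i) • ∑ i' ∈ S.erase i, koszulFace t j (S.erase i) i' := by
  rw [koszulFace_of_mem t hS hi, koszulDiff_single]

lemma smul_koszulFace_add_smul_koszulFace (t : σ → R) {j : ℕ} {S : Finset σ}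
    (hS : S.card = j + 2) {i i' : σ} (hi : i ∈ S) (hi' : i' ∈ S) (hne : i' ≠ i) :
    ((-1) ^ #{a ∈ S | a < i} * t i) • koszulFace t j (S.erase i) i'
      + ((-1) ^ #{a ∈ S | a < i'} * t i') • koszulFace t j (S.erase i') i = 0 := by
  have hSi : (S.erase i).card = j + 1 := by rw [card_erase_of_mem hi, hS]; rfl
  have hSi' : (S.erase i').card = j + 1 := by rw [card_erase_of_mem hi', hS]; rfl
  rw [koszulFace_of_mem t hSi (mem_erase.mpr ⟨hne, hi'⟩),
    koszulFace_of_mem t hSi' (mem_erase.mpr ⟨hne.symm, hi⟩),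
    KoszulChain.single_congr _ (erase_right_comm ..), Finsupp.smul_single, Finsupp.smul_single,
    ← Finsupp.single_add, smul_eq_mul, smul_eq_mul]
  refine (congrArg _ ?_).trans (Finsupp.single_zero _)
  linear_combination (t i * t i') * neg_one_pow_filter_erase_add (R := R) hi hi' hne

theorem koszulDiff_comp_koszulDiff (t : σ → R) (j : ℕ) :
    koszulDiff t j ∘ₗ koszulDiff t (j + 1) = 0 := by
  refine Finsupp.lhom_ext fun ⟨S, hS⟩ r => ?_
  rw [LinearMap.comp_apply, koszulDiff_single, map_smul, map_sum,
    sum_congr rfl fun i hi => koszulDiff_koszulFace t hS hi, LinearMap.zero_apply]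
  convert smul_zero r
  simp_rw [smul_sum]
  rw [sum_sigma']
  refine sum_involution (fun p _ => ⟨p.2, p.1⟩) (fun p hp => ?_) (fun p hp _ h => ?_)
    (fun p hp => ?_) (fun _ _ => rfl)
  all_goals obtain ⟨hp₁, hp₂⟩ := mem_sigma.mp hp; obtain ⟨hne, hp₂⟩ := mem_erase.mp hp₂
  · exact smul_koszulFace_add_smul_koszulFace t hS hp₁ hp₂ hne
  · exact hne (congrArg Sigma.fst h)
  · exact mem_sigma.mpr ⟨hp₂, mem_erase.mpr ⟨hne.symm, hp₁⟩⟩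

lemma mapRange_koszulFace (f : R →+* R') (t : σ → R) (j : ℕ) (S : Finset σ) (i : σ) :
    Finsupp.mapRange f f.map_zero (koszulFace t j S i) = koszulFace (f ∘ t) j S i := by
  unfold koszulFace
  split_ifs <;> simp only [Finsupp.mapRange_single, Finsupp.mapRange_zero, map_mul, map_pow,
    map_neg, map_one, Function.comp_apply]

lemma mapRange_koszulDiff (f : R →+* R') (t : σ → R) (j : ℕ) (x : KoszulChain σ R (j + 1)) :
    Finsupp.mapRange f f.map_zero (koszulDiff t j x)
      = koszulDiff (f ∘ t) j (Finsupp.mapRange f f.map_zero x) := by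
  induction x using Finsupp.induction_linear with
  | zero => simp
  | add x y hx hy => rw [map_add, Finsupp.mapRange_add (map_add f), hx, hy,
      Finsupp.mapRange_add (map_add f), map_add]
  | single S r =>
    obtain ⟨S, hS⟩ := S
    rw [koszulDiff_single, Finsupp.mapRange_single, koszulDiff_single,
      Finsupp.mapRange_smul' r (f r) _ fun _ => map_mul f _ _,
      Finsupp.mapRange_finsetSum f]
    simp_rw [mapRange_koszulFace f]

theorem exact_koszulDiff_iff_of_ringEquiv (e : R ≃+* R') (t : σ → R) (j : ℕ) :
    Function.Exact (koszulDiff (e ∘ t) (j + 1)) (koszulDiff (e ∘ t) j) ↔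
      Function.Exact (koszulDiff t (j + 1)) (koszulDiff t j) :=
  Function.Exact.iff_of_ladder_addEquiv (Finsupp.mapRange.addEquiv e.toAddEquiv)
    (Finsupp.mapRange.addEquiv e.toAddEquiv) (Finsupp.mapRange.addEquiv e.toAddEquiv)
    (f₁₂ := (koszulDiff t (j + 1)).toAddMonoidHom) (f₂₃ := (koszulDiff t j).toAddMonoidHom)
    (g₁₂ := (koszulDiff (e ∘ t) (j + 1)).toAddMonoidHom)
    (g₂₃ := (koszulDiff (e ∘ t) j).toAddMonoidHom)
    (AddMonoidHom.ext fun x => (mapRange_koszulDiff e.toRingHom t _ x).symm)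
    (AddMonoidHom.ext fun x => (mapRange_koszulDiff e.toRingHom t _ x).symm)

theorem exact_koszulDiff_koszulAug_iff_of_ringEquiv (e : MvPolynomial σ R ≃+* MvPolynomial σ R)
    (he : ∀ p, constantCoeff (e p) = constantCoeff p) (t : σ → MvPolynomial σ R) :
    Function.Exact (koszulDiff (e ∘ t) 0) koszulAug ↔
      Function.Exact (koszulDiff t 0) koszulAug :=
  Function.Exact.iff_of_ladder_addEquiv (Finsupp.mapRange.addEquiv e.toAddEquiv)
    (Finsupp.mapRange.addEquiv e.toAddEquiv) (AddEquiv.refl R)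
    (f₁₂ := (koszulDiff t 0).toAddMonoidHom) (g₁₂ := (koszulDiff (e ∘ t) 0).toAddMonoidHom)
    (f₂₃ := koszulAug) (g₂₃ := koszulAug)
    (AddMonoidHom.ext fun x => (mapRange_koszulDiff e.toRingHom t 0 x).symm)
    (AddMonoidHom.ext fun x => he (x ⟨∅, card_empty⟩))

lemma koszulAug_koszulDiff {t : σ → MvPolynomial σ R} (ht : ∀ i, constantCoeff (t i) = 0)
    (x : KoszulChain σ (MvPolynomial σ R) 1) : koszulAug (koszulDiff t 0 x) = 0 := by
  induction x using Finsupp.induction_linear with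
  | zero => simp
  | add x y hx hy => rw [map_add, map_add, hx, hy, add_zero]
  | single S r =>
    obtain ⟨S, hS⟩ := S
    simp only [koszulAug, koszulDiff_single, AddMonoidHom.comp_apply,
      Finsupp.applyAddHom_apply, Finsupp.smul_apply, Finsupp.finsetSum_apply,
      smul_eq_mul, RingHom.toAddMonoidHom_eq_coe, AddMonoidHom.coe_coe, map_mul, map_sum]
    refine mul_eq_zero_of_right _ (sum_eq_zero fun i hi => ?_)
    rw [koszulFace_of_mem t hS hi, Finsupp.single_apply]
    split_ifs <;> simp [ht]

end KoszulComplex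

section CoordinateKoszulComplex

variable {σ R : Type*} [CommRing R] [LinearOrder σ]

lemma support_add_single_union_erase (α : σ →₀ ℕ) {S : Finset σ} {i : σ} (hi : i ∈ S) :
    (α + Finsupp.single i 1).support ∪ S.erase i = α.support ∪ S := by
  ext a
  by_cases h : a = i
  · subst h
    simp [hi]
  · simp [h]

noncomputable def koszulHomotopyMonomial {j : ℕ} (S : Finset σ) (hS : S.card = j)
    (α : σ →₀ ℕ) : R →+ KoszulChain σ (MvPolynomial σ R) (j + 1) :=
  if hT : (α.support ∪ S).Nonempty then
    if hm : (α.support ∪ S).min' hT ∈ S then 0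
    else (Finsupp.singleAddHom ⟨insert _ S, by rw [card_insert_of_notMem hm, hS]⟩).comp
      (monomial (α - Finsupp.single ((α.support ∪ S).min' hT) 1)).toAddMonoidHom
  else 0

lemma koszulHomotopyMonomial_of_isLeast_mem {j : ℕ} {S : Finset σ} (hS : S.card = j)
    {α : σ →₀ ℕ} {m : σ} (hm : IsLeast ↑(α.support ∪ S) m) (hmS : m ∈ S) :
    koszulHomotopyMonomial (R := R) S hS α = 0 := by
  have hT : (α.support ∪ S).Nonempty := ⟨m, hm.1⟩
  obtain rfl : (α.support ∪ S).min' hT = m := (isLeast_min' _ hT).unique hm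
  rw [koszulHomotopyMonomial, dif_pos hT, dif_pos hmS]

lemma koszulHomotopyMonomial_of_isLeast_notMem {j : ℕ} {S : Finset σ} (hS : S.card = j)
    {α : σ →₀ ℕ} {m : σ} (hm : IsLeast ↑(α.support ∪ S) m) (hmS : m ∉ S) (c : R) :
    koszulHomotopyMonomial S hS α c = Finsupp.single
      ⟨insert m S, by rw [card_insert_of_notMem hmS, hS]⟩
      (monomial (α - Finsupp.single m 1) c) := by
  have hT : (α.support ∪ S).Nonempty := ⟨m, hm.1⟩
  obtain rfl : (α.support ∪ S).min' hT = m := (isLeast_min' _ hT).unique hm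
  rw [koszulHomotopyMonomial, dif_pos hT, dif_neg hmS]
  rfl

lemma koszulHomotopyMonomial_empty_zero :
    koszulHomotopyMonomial (σ := σ) (R := R) ∅ card_empty 0 = 0 :=
  dif_neg (by simp)

noncomputable def koszulHomotopy (j : ℕ) :
    KoszulChain σ (MvPolynomial σ R) j →+ KoszulChain σ (MvPolynomial σ R) (j + 1) :=
  Finsupp.liftAddHom fun S => (Finsupp.liftAddHom (koszulHomotopyMonomial S.1 S.2)).comp
    AddMonoidAlgebra.coeffAddEquiv.toAddMonoidHom

lemma koszulHomotopy_single_monomial {j : ℕ} (S : Finset σ) (hS : S.card = j) (α : σ →₀ ℕ)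
    (c : R) :
    koszulHomotopy j (Finsupp.single ⟨S, hS⟩ (monomial α c)) = koszulHomotopyMonomial S hS α c := by
  rw [koszulHomotopy, Finsupp.liftAddHom_apply_single, AddMonoidHom.comp_apply]
  exact Finsupp.liftAddHom_apply_single _ α c

lemma monomial_smul_koszulFace_X {j : ℕ} {S : Finset σ} (hS : S.card = j + 1) {i : σ}
    (hi : i ∈ S) (α : σ →₀ ℕ) (c : R) :
    monomial α c • koszulFace X j S i = Finsupp.single
      ⟨S.erase i, by rw [card_erase_of_mem hi, hS, Nat.add_sub_cancel]⟩
      (monomial (α + Finsupp.single i 1) ((-1) ^ #{a ∈ S | a < i} * c)) := by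
  rw [koszulFace_of_mem X hS hi, Finsupp.smul_single, smul_eq_mul, X,
    show ((-1) ^ #{a ∈ S | a < i} : MvPolynomial σ R) = C ((-1) ^ #{a ∈ S | a < i}) by simp,
    C_mul_monomial, monomial_mul, mul_one, mul_comm c]

lemma koszulHomotopy_monomial_smul_koszulFace_X {j : ℕ} {S : Finset σ} (hS : S.card = j + 1)
    {i : σ} (hi : i ∈ S) (α : σ →₀ ℕ) (c : R) :
    koszulHomotopy j (monomial α c • koszulFace X j S i) = koszulHomotopyMonomial (S.erase i)
      (by rw [card_erase_of_mem hi, hS, Nat.add_sub_cancel]) (α + Finsupp.single i 1)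
      ((-1) ^ #{a ∈ S | a < i} * c) := by
  rw [monomial_smul_koszulFace_X hS hi, koszulHomotopy_single_monomial]

lemma monomial_smul_koszulFace_X_insert_of_isLeast {j : ℕ} {S : Finset σ} (hS : S.card = j)
    {α : σ →₀ ℕ} {m : σ} (hm : IsLeast ↑(α.support ∪ S) m) (hmS : m ∉ S) (c : R) :
    monomial (α - Finsupp.single m 1) c •
        koszulFace X j (insert m S) m = Finsupp.single ⟨S, hS⟩ (monomial α c) := by
  have hmα : m ∈ α.support := (mem_union.mp hm.1).resolve_right hmS
  have hfilter : #{a ∈ insert m S | a < m} = 0 := by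
    refine card_eq_zero.mpr (filter_eq_empty_iff.mpr fun a ha => not_lt.mpr (hm.2 ?_))
    rcases mem_insert.mp ha with rfl | ha
    · exact hm.1
    · exact mem_union_right _ ha
  rw [monomial_smul_koszulFace_X (by rw [card_insert_of_notMem hmS, hS]) (mem_insert_self m S),
    KoszulChain.single_congr _ (erase_insert hmS), hfilter, pow_zero, one_mul,
    tsub_add_cancel_of_le (Finsupp.single_le_iff.mpr (Nat.one_le_iff_ne_zero.mpr
      (Finsupp.mem_support_iff.mp hmα)))]

lemma koszulHomotopy_koszulDiff_X_of_isLeast_mem {j : ℕ} {S : Finset σ}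
    (hS : S.card = j + 1) {α : σ →₀ ℕ} {m : σ} (hm : IsLeast ↑(α.support ∪ S) m) (hmS : m ∈ S)
    (c : R) :
    koszulHomotopy j (koszulDiff X j (Finsupp.single ⟨S, hS⟩ (monomial α c)))
      = Finsupp.single ⟨S, hS⟩ (monomial α c) := by
  have hm' : ∀ i ∈ S, IsLeast ↑((α + Finsupp.single i 1).support ∪ S.erase i) m := fun i hi =>
    support_add_single_union_erase α hi ▸ hm
  have hfilter : #{a ∈ S | a < m} = 0 :=
    card_eq_zero.mpr (filter_eq_empty_iff.mpr fun a ha => not_lt.mpr (hm.2 (mem_union_right _ ha)))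
  rw [koszulDiff_single, smul_sum, map_sum, sum_eq_single_of_mem m hmS fun i hi hne => by
    rw [koszulHomotopy_monomial_smul_koszulFace_X hS hi,
      koszulHomotopyMonomial_of_isLeast_mem _ (hm' i hi) (mem_erase.mpr ⟨hne.symm, hmS⟩),
      AddMonoidHom.zero_apply]]
  rw [koszulHomotopy_monomial_smul_koszulFace_X hS hmS,
    koszulHomotopyMonomial_of_isLeast_notMem _ (hm' m hmS) (notMem_erase m S),
    KoszulChain.single_congr _ (insert_erase hmS), hfilter, pow_zero, one_mul]
  simp only [add_tsub_cancel_right]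

lemma koszulDiff_X_koszulHomotopyMonomial_of_isLeast_notMem {j : ℕ} {S : Finset σ}
    (hS : S.card = j) {α : σ →₀ ℕ} {m : σ} (hm : IsLeast ↑(α.support ∪ S) m) (hmS : m ∉ S)
    (c : R) :
    koszulDiff X j (koszulHomotopyMonomial S hS α c) = Finsupp.single ⟨S, hS⟩ (monomial α c)
      + ∑ i ∈ S, monomial (α - Finsupp.single m 1) c • koszulFace X j (insert m S) i := by
  rw [koszulHomotopyMonomial_of_isLeast_notMem hS hm hmS, koszulDiff_single, sum_insert hmS,
    smul_add, monomial_smul_koszulFace_X_insert_of_isLeast hS hm hmS, smul_sum]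

lemma monomial_smul_koszulFace_X_insert_add_koszulHomotopy {j : ℕ} {S : Finset σ}
    (hS : S.card = j + 1) {α : σ →₀ ℕ} {m : σ} (hm : IsLeast ↑(α.support ∪ S) m) (hmS : m ∉ S)
    (c : R) {i : σ} (hi : i ∈ S) :
    monomial (α - Finsupp.single m 1) c •
        koszulFace (X : σ → MvPolynomial σ R) (j + 1) (insert m S) i
      + koszulHomotopy j (monomial α c • koszulFace X j S i) = 0 := by
  have hmα : m ∈ α.support := (mem_union.mp hm.1).resolve_right hmS
  have hmi : m < i :=
    lt_of_le_of_ne (hm.2 (mem_union_right _ hi)) (ne_of_mem_of_not_mem hi hmS).symm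
  have hfilter : #{a ∈ insert m S | a < i} = #{a ∈ S | a < i} + 1 := by
    rw [filter_insert, if_pos hmi, card_insert_of_notMem fun h => hmS (mem_filter.mp h).1]
  rw [monomial_smul_koszulFace_X (by rw [card_insert_of_notMem hmS, hS]) (mem_insert_of_mem hi),
    koszulHomotopy_monomial_smul_koszulFace_X hS hi,
    koszulHomotopyMonomial_of_isLeast_notMem _ (support_add_single_union_erase α hi ▸ hm)
      (fun h => hmS (mem_of_mem_erase h)),
    KoszulChain.single_congr _ (erase_insert_of_ne hmi.ne), ← Finsupp.single_add,
    tsub_add_eq_add_tsub (Finsupp.single_le_iff.mpr (Nat.one_le_iff_ne_zero.mpr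
      (Finsupp.mem_support_iff.mp hmα))), ← map_add, hfilter, pow_succ,
    show (-1) ^ #{a ∈ S | a < i} * -1 * c + (-1) ^ #{a ∈ S | a < i} * c = (0 : R) by ring,
    map_zero, Finsupp.single_zero]

lemma koszulDiff_X_koszulHomotopy_add_single {j : ℕ} (S : Finset σ) (hS : S.card = j + 1)
    (α : σ →₀ ℕ) (c : R) :
    koszulDiff X (j + 1) (koszulHomotopy (j + 1) (Finsupp.single ⟨S, hS⟩ (monomial α c)))
      + koszulHomotopy j (koszulDiff X j (Finsupp.single ⟨S, hS⟩ (monomial α c)))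
      = Finsupp.single ⟨S, hS⟩ (monomial α c) := by
  have hT : (α.support ∪ S).Nonempty :=
    (card_pos.mp (by omega : 0 < S.card)).mono subset_union_right
  have hm := isLeast_min' _ hT
  rw [koszulHomotopy_single_monomial]
  by_cases hmS : (α.support ∪ S).min' hT ∈ S
  · rw [koszulHomotopyMonomial_of_isLeast_mem hS hm hmS, AddMonoidHom.zero_apply, map_zero,
      zero_add, koszulHomotopy_koszulDiff_X_of_isLeast_mem hS hm hmS]
  · rw [koszulDiff_X_koszulHomotopyMonomial_of_isLeast_notMem hS hm hmS, koszulDiff_single,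
      smul_sum, map_sum, add_assoc, ← sum_add_distrib,
      sum_eq_zero fun i hi => monomial_smul_koszulFace_X_insert_add_koszulHomotopy hS hm hmS c hi,
      add_zero]

theorem koszulDiff_X_koszulHomotopy_add (j : ℕ) (x : KoszulChain σ (MvPolynomial σ R) (j + 1)) :
    koszulDiff (X : σ → MvPolynomial σ R) (j + 1) (koszulHomotopy (j + 1) x)
      + koszulHomotopy j (koszulDiff X j x) = x := by
  have key : (koszulDiff (X : σ → MvPolynomial σ R) (j + 1)).toAddMonoidHom.comp
        (koszulHomotopy (j + 1))
      + (koszulHomotopy j).comp (koszulDiff X j).toAddMonoidHom = AddMonoidHom.id _ :=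
    KoszulChain.addMonoidHom_ext fun S hS α c => koszulDiff_X_koszulHomotopy_add_single S hS α c
  exact DFunLike.congr_fun key x

lemma koszulDiff_X_koszulHomotopy_add_koszulAug_single (α : σ →₀ ℕ) (c : R) :
    koszulDiff X 0 (koszulHomotopy 0 (Finsupp.single ⟨∅, card_empty⟩ (monomial α c)))
      + Finsupp.single ⟨∅, card_empty⟩
        (C (koszulAug (Finsupp.single ⟨∅, card_empty⟩ (monomial α c))))
      = Finsupp.single ⟨∅, card_empty⟩ (monomial α c) := by
  have haug : koszulAug (Finsupp.single ⟨∅, card_empty⟩ (monomial α c))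
      = constantCoeff (monomial α c) := by
    simp [koszulAug]
  rw [koszulHomotopy_single_monomial, haug, constantCoeff_monomial]
  by_cases hα : α = 0
  · subst hα
    rw [koszulHomotopyMonomial_empty_zero, AddMonoidHom.zero_apply, map_zero, zero_add,
      if_pos rfl, C_apply]
  · have hT : (α.support ∪ ∅).Nonempty := by simpa using hα
    rw [koszulDiff_X_koszulHomotopyMonomial_of_isLeast_notMem _ (isLeast_min' _ hT)
      (notMem_empty _), sum_empty, if_neg hα, map_zero, Finsupp.single_zero, add_zero, add_zero]

theorem koszulDiff_X_koszulHomotopy_add_koszulAug (x : KoszulChain σ (MvPolynomial σ R) 0) :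
    koszulDiff X 0 (koszulHomotopy 0 x) + Finsupp.single ⟨∅, card_empty⟩ (C (koszulAug x)) = x := by
  have key : (koszulDiff (X : σ → MvPolynomial σ R) 0).toAddMonoidHom.comp (koszulHomotopy 0)
      + (Finsupp.singleAddHom ⟨∅, card_empty⟩).comp
        ((C : R →+* MvPolynomial σ R).toAddMonoidHom.comp koszulAug) = AddMonoidHom.id _ := by
    refine KoszulChain.addMonoidHom_ext fun S hS α c => ?_
    obtain rfl := card_eq_zero.mp hS
    exact koszulDiff_X_koszulHomotopy_add_koszulAug_single α c
  exact DFunLike.congr_fun key x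

theorem exact_koszulDiff_X (j : ℕ) :
    Function.Exact (koszulDiff (X : σ → MvPolynomial σ R) (j + 1)) (koszulDiff X j) := fun x =>
  ⟨fun hx => ⟨koszulHomotopy (j + 1) x, by
    simpa [hx] using koszulDiff_X_koszulHomotopy_add j x⟩,
   fun ⟨w, hw⟩ => hw ▸ LinearMap.congr_fun (koszulDiff_comp_koszulDiff X j) w⟩

theorem exact_koszulDiff_X_koszulAug :
    Function.Exact (koszulDiff (X : σ → MvPolynomial σ R) 0) koszulAug := fun x =>
  ⟨fun hx => ⟨koszulHomotopy 0 x, by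
    simpa [hx] using koszulDiff_X_koszulHomotopy_add_koszulAug x⟩,
   fun ⟨w, hw⟩ => hw ▸ koszulAug_koszulDiff (constantCoeff_X R) w⟩

end CoordinateKoszulComplex

section LinearSubstitution

variable {R M ι : Type*} [CommRing R] [AddCommGroup M] [Module R M] [Fintype ι] [DecidableEq ι]

lemma bind₁_toMvPolynomial_comp_bind₁_toMvPolynomial_symm (b : Module.Basis ι R M)
    (u : M ≃ₗ[R] M) :
    (bind₁ ((u : M →ₗ[R] M).toMvPolynomial b b)).comp
      (bind₁ ((u.symm : M →ₗ[R] M).toMvPolynomial b b)) = AlgHom.id R _ := by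
  refine algHom_ext fun i => ?_
  rw [AlgHom.comp_apply, bind₁_X_right, ← LinearMap.toMvPolynomial_comp, LinearEquiv.symm_comp,
    LinearMap.toMvPolynomial_id, AlgHom.id_apply]

noncomputable def LinearEquiv.toMvPolynomialAlgEquiv (b : Module.Basis ι R M) (u : M ≃ₗ[R] M) :
    MvPolynomial ι R ≃ₐ[R] MvPolynomial ι R :=
  AlgEquiv.ofAlgHom (bind₁ ((u : M →ₗ[R] M).toMvPolynomial b b))
    (bind₁ ((u.symm : M →ₗ[R] M).toMvPolynomial b b))
    (bind₁_toMvPolynomial_comp_bind₁_toMvPolynomial_symm b u)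
    (by simpa using bind₁_toMvPolynomial_comp_bind₁_toMvPolynomial_symm b u.symm)

lemma LinearEquiv.toMvPolynomialAlgEquiv_X (b : Module.Basis ι R M) (u : M ≃ₗ[R] M) (i : ι) :
    u.toMvPolynomialAlgEquiv b (X i) = (u : M →ₗ[R] M).toMvPolynomial b b i :=
  bind₁_X_right _ i

lemma LinearEquiv.constantCoeff_toMvPolynomialAlgEquiv (b : Module.Basis ι R M) (u : M ≃ₗ[R] M)
    (p : MvPolynomial ι R) : constantCoeff (u.toMvPolynomialAlgEquiv b p) = constantCoeff p := by
  induction p using MvPolynomial.induction_on with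
  | C a => rw [← algebraMap_eq, AlgEquiv.commutes]
  | add p q hp hq => rw [map_add, map_add, map_add, hp, hq]
  | mul_X p i hp =>
    rw [map_mul, map_mul, map_mul, hp, toMvPolynomialAlgEquiv_X,
      LinearMap.toMvPolynomial_constantCoeff, constantCoeff_X]

end LinearSubstitution

lemma LinearEquiv.injective_id_sub_symm {R M : Type*} [Ring R] [AddCommGroup M] [Module R M]
    (g : M ≃ₗ[R] M) (hfix : ∀ v, g v = v → v = 0) :
    Function.Injective ((LinearMap.id : M →ₗ[R] M) - (g.symm : M →ₗ[R] M)) := by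
  refine (injective_iff_map_eq_zero _).mpr fun v hv => hfix v ?_
  have hv : g.symm v = v := (sub_eq_zero.mp hv).symm
  rw [← hv, LinearEquiv.apply_symm_apply, hv]

lemma sectionPoly_eq_toMvPolynomial (g : (Fin n → k) ≃ₗ[k] (Fin n → k)) :
    sectionPoly k n g = (LinearMap.id - (g.symm : (Fin n → k) →ₗ[k] (Fin n → k))).toMvPolynomial
      (Pi.basisFun k (Fin n)) (Pi.basisFun k (Fin n)) := by
  ext i : 1
  rw [sectionPoly, LinearMap.toMvPolynomial, map_sub, LinearMap.toMatrix_id, Matrix.toMvPolynomial]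
  simp only [Matrix.sub_apply, map_sub, sum_sub_distrib, ← C_mul_X_eq_monomial]
  congr 1
  simpa [Matrix.toMvPolynomial, ← C_mul_X_eq_monomial] using
    (congrFun (Matrix.toMvPolynomial_one (R := k) (n := Fin n)) i).symm

noncomputable def sectionCoordChange (g : (Fin n → k) ≃ₗ[k] (Fin n → k))
    (hfix : ∀ v : Fin n → k, g v = v → v = 0) : KRing' k n ≃ₐ[k] KRing' k n :=
  (LinearEquiv.ofInjectiveEndo _ (g.injective_id_sub_symm hfix)).toMvPolynomialAlgEquiv
    (Pi.basisFun k (Fin n))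

lemma sectionPoly_eq_sectionCoordChange_comp_X (g : (Fin n → k) ≃ₗ[k] (Fin n → k))
    (hfix : ∀ v : Fin n → k, g v = v → v = 0) :
    sectionPoly k n g = sectionCoordChange k n g hfix ∘ X := by
  ext i : 1
  rw [sectionPoly_eq_toMvPolynomial, Function.comp_apply, sectionCoordChange,
    LinearEquiv.toMvPolynomialAlgEquiv_X]
  rfl

theorem koszul_one_minus_g_resolution (g : (Fin n → k) ≃ₗ[k] (Fin n → k))
    (hfix : ∀ v : Fin n → k, g v = v → v = 0) :
    (Function.Surjective (koszulAug' k n)) ∧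
    (Function.Exact (koszulD' k n g 0) (koszulAug' k n)) ∧
    (∀ j : ℕ, Function.Exact (koszulD' k n g (j + 1)) (koszulD' k n g j)) := by
  have hd (j : ℕ) :
      koszulD' k n g j = koszulDiff ((sectionCoordChange k n g hfix).toRingEquiv ∘ X) j := by
    rw [koszulD'_eq_koszulDiff, sectionPoly_eq_sectionCoordChange_comp_X k n g hfix]
    rfl
  rw [koszulAug'_eq_koszulAug]
  refine ⟨koszulAug_surjective, ?_, fun j => ?_⟩
  · rw [hd, exact_koszulDiff_koszulAug_iff_of_ringEquiv _
      (LinearEquiv.constantCoeff_toMvPolynomialAlgEquiv _ _)]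
    exact exact_koszulDiff_X_koszulAug
  · rw [hd, hd, exact_koszulDiff_iff_of_ringEquiv]
    exact exact_koszulDiff_X j
end

section
/- Let G be a group acting on a k-module M, decompose M = ⨁_{O} M_O over conjugacy classes O of G where M = ⨁_{g∈G} M_g with h·M_g ⊆ M_{hgh⁻¹}, and M_O = ⨁_{g∈O} M_g. Fix g ∈ O and let C_g be the centralizer of g. Then M_O is isomorphic as a G-module to the induced module Ind_{C_g}^G M_g, and consequently the coinvariants satisfy (M_O)_G ≅ (M_g)_{C_g}. -/
variable (k M G : Type*) [CommRing k] [AddCommGroup M] [Module k M] [Group G] [Fintype G] [DecidableEq G]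
  [DistribMulAction G M] [SMulCommClass G k M]

/-- The summand `M_O = ⨁_{g' ∈ O} M_{g'}` associated to the conjugacy class `O` of `g`. -/
def conjClassPart (Mg : G → Submodule k M) (g : G) : Submodule k M :=
  ⨆ x ∈ {x : G | IsConj g x}, Mg x

/-- The module `Ind_{C_g}^G M_g` induced from the centralizer `C_g` of `g`, realized
(for the finite group `G`) as the `C_g`-equivariant functions `G → M_g`, with `G`
acting by right translation. -/
def inducedFromCentralizer (Mg : G → Submodule k M) (g : G) : Submodule k (G → M) where
  carrier := {f | (∀ x : G, f x ∈ Mg g) ∧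
      ∀ c ∈ Subgroup.centralizer ({g} : Set G), ∀ x : G, f (c * x) = c • f x}
  add_mem' := by
    rintro f₁ f₂ ⟨h₁, h₁'⟩ ⟨h₂, h₂'⟩
    refine ⟨fun x => (Mg g).add_mem (h₁ x) (h₂ x), fun c hc x => ?_⟩
    show f₁ (c * x) + f₂ (c * x) = c • (f₁ x + f₂ x)
    rw [h₁' c hc x, h₂' c hc x, smul_add]
  zero_mem' := ⟨fun _ => (Mg g).zero_mem, fun c _ x => by simp⟩
  smul_mem' := by
    rintro r f ⟨h, h'⟩
    refine ⟨fun x => (Mg g).smul_mem r (h x), fun c hc x => ?_⟩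
    show r • f (c * x) = c • (r • f x)
    rw [h' c hc x]
    exact (smul_comm c r (f x)).symm

/-- The coinvariants `N_H` of a submodule `N ⊆ M` under the elements of a set
`S ⊆ G`: the quotient of `N` by the span of the elements `h • n − n`. -/
abbrev coinvariants (N : Submodule k M) (S : Set G) :=
  N ⧸ Submodule.span k {z : N | ∃ h ∈ S, ∃ n : N, (z : M) = h • (n : M) - (n : M)}

/-! Write `π_x` for the projection of `M` onto `M_x` and `C` for the centralizer of `g`. Since
`h • M_x ⊆ M_{hxh⁻¹}`, the projections are equivariant: `π_{hxh⁻¹} (h • m) = h • π_x m`. Hence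
`m ↦ (x ↦ π_g (x • m))` maps `M` into `Ind_C^G M_g`, and on `M_O` it is inverted by
`f ↦ ∑_{qC ∈ G/C} q • f q⁻¹`, because `qC ↦ q g q⁻¹` is a bijection `G/C ≃ O`. On coinvariants,
`m ↦ ∑_{qC ∈ G/C} [π_g (q⁻¹ • m)]` is `G`-invariant and inverts the map induced by `M_g ⊆ M_O`. -/

namespace DirectSum.IsInternal

variable {R ι N : Type*} [Semiring R] [AddCommMonoid N] [Module R N] [DecidableEq ι]
  {A : ι → Submodule R N} (hA : IsInternal A)

noncomputable def proj (i : ι) : N →ₗ[R] A i :=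
  component R ι (fun i ↦ A i) i ∘ₗ (LinearEquiv.ofBijective (coeLinearMap A) hA).symm.toLinearMap

theorem proj_of_mem {i : ι} {x : N} (hx : x ∈ A i) : hA.proj i x = ⟨x, hx⟩ :=
  hA.ofBijective_coeLinearMap_of_mem hx

theorem proj_of_mem_ne {i j : ι} (hij : i ≠ j) {x : N} (hx : x ∈ A i) : hA.proj j x = 0 :=
  hA.ofBijective_coeLinearMap_of_mem_ne hij hx

end DirectSum.IsInternal

section QuotientSum

variable {G N : Type*} [Group G] [AddCommMonoid N] {H : Subgroup G}

theorem QuotientGroup.mul_out_mem_iff (x : G) (q : G ⧸ H) :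
    x * q.out ∈ H ↔ ((x⁻¹ : G) : G ⧸ H) = q := by
  conv_rhs => rw [← QuotientGroup.out_eq' q]
  rw [QuotientGroup.eq, inv_inv]

theorem QuotientGroup.sum_mul_out_eq_sum_out [Fintype (G ⧸ H)] {f : G → N}
    (hf : ∀ x, ∀ c ∈ H, f (x * c) = f x) (h : G) :
    ∑ q : G ⧸ H, f (h * q.out) = ∑ q : G ⧸ H, f q.out := by
  have hout (q : G ⧸ H) : f (h * q.out) = f (h • q).out := by
    have hc : (h * q.out)⁻¹ * (h • q).out ∈ H := by
      rw [← QuotientGroup.eq, QuotientGroup.out_eq', ← smul_eq_mul, MulAction.Quotient.mk_smul_out]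
    rw [← hf _ _ hc, mul_inv_cancel_left]
  simp_rw [hout]
  exact Fintype.sum_bijective _ (MulAction.bijective h) _ _ fun _ ↦ rfl

end QuotientSum

section Centralizer

variable {G : Type*} [Group G]

theorem Subgroup.mem_centralizer_singleton_iff_conj_eq {g c : G} :
    c ∈ centralizer {g} ↔ c * g * c⁻¹ = g := by
  rw [mem_centralizer_singleton_iff, mul_inv_eq_iff_eq_mul]

theorem conj_eq_conj_iff_mk_eq {g a b : G} :
    a * g * a⁻¹ = b * g * b⁻¹ ↔ (a : G ⧸ Subgroup.centralizer {g}) = b := by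
  rw [QuotientGroup.eq, Subgroup.mem_centralizer_singleton_iff_conj_eq,
    show a⁻¹ * b * g * (a⁻¹ * b)⁻¹ = a⁻¹ * (b * g * b⁻¹) * a by group]
  constructor
  · intro h; rw [← h]; group
  · intro h; nth_rewrite 1 [← h]; group

end Centralizer

theorem coinvariants_mk_eq_of_eq_smul {k M G : Type*} [CommRing k] [AddCommGroup M] [Module k M]
    [Group G] [DistribMulAction G M] {N : Submodule k M} {S : Set G} {h : G} (hh : h ∈ S)
    {n n' : N} (hn : (n' : M) = h • (n : M)) :
    (Submodule.Quotient.mk n' : coinvariants k M G N S) = Submodule.Quotient.mk n := by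
  rw [Submodule.Quotient.eq]
  exact Submodule.subset_span ⟨h, hh, n, by rw [Submodule.coe_sub, hn]⟩

section Graded

variable {k M G : Type*} [CommRing k] [AddCommGroup M] [Module k M] [Group G]
  {Mg : G → Submodule k M}

theorem le_conjClassPart {g x : G} (hx : IsConj g x) : Mg x ≤ conjClassPart k M G Mg g :=
  le_iSup₂ (f := fun x (_ : x ∈ {x : G | IsConj g x}) ↦ Mg x) x hx

variable [DecidableEq G] (hdir : DirectSum.IsInternal Mg)

theorem DirectSum.IsInternal.sum_proj_conj_out {g : G} [Fintype (G ⧸ Subgroup.centralizer {g})]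
    {m : M} (hm : m ∈ conjClassPart k M G Mg g) :
    ∑ q : G ⧸ Subgroup.centralizer {g}, (hdir.proj (q.out * g * q.out⁻¹) m : M) = m := by
  classical
  rw [conjClassPart, ← iSup_subtype''] at hm
  refine Submodule.iSup_induction
    (motive := fun m ↦
      ∑ q : G ⧸ Subgroup.centralizer {g}, (hdir.proj (q.out * g * q.out⁻¹) m : M) = m) _ hm
    (fun ⟨y, hy⟩ m hm ↦ ?_) (by simp) fun m m' hm hm' ↦ by
      simp [Finset.sum_add_distrib, hm, hm']
  obtain ⟨a, rfl⟩ := isConj_iff.1 hy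
  have hterm (q : G ⧸ Subgroup.centralizer {g}) :
      (hdir.proj (q.out * g * q.out⁻¹) m : M) =
        if (a : G ⧸ Subgroup.centralizer {g}) = q then m else 0 := by
    have hconj : a * g * a⁻¹ = q.out * g * q.out⁻¹ ↔ (a : G ⧸ _) = q := by
      rw [conj_eq_conj_iff_mk_eq, QuotientGroup.out_eq']
    split_ifs with h
    · rw [← hconj.2 h, hdir.proj_of_mem hm]
    · rw [hdir.proj_of_mem_ne (mt hconj.1 h) hm, Submodule.coe_zero]
  simp [hterm]

variable [DistribMulAction G M] (hact : ∀ (h g' : G), ∀ m ∈ Mg g', h • m ∈ Mg (h * g' * h⁻¹))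
include hact

theorem DirectSum.IsInternal.proj_conj_smul (h x : G) (m : M) :
    (hdir.proj (h * x * h⁻¹) (h • m) : M) = h • (hdir.proj x m : M) := by
  have hm : m ∈ ⨆ y, Mg y := hdir.submodule_iSup_eq_top ▸ Submodule.mem_top
  refine Submodule.iSup_induction
    (motive := fun m ↦ (hdir.proj (h * x * h⁻¹) (h • m) : M) = h • (hdir.proj x m : M)) _ hm
    (fun y m hm ↦ ?_) (by simp) fun m m' hm hm' ↦ by simp [smul_add, hm, hm']
  obtain rfl | hyx := eq_or_ne y x
  · rw [hdir.proj_of_mem hm, hdir.proj_of_mem (hact _ _ _ hm)]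
  · rw [hdir.proj_of_mem_ne hyx hm, hdir.proj_of_mem_ne (conj_injective.ne hyx) (hact _ _ _ hm)]
    simp

theorem DirectSum.IsInternal.proj_smul_of_mem_centralizer {g c : G}
    (hc : c ∈ Subgroup.centralizer {g}) (m : M) :
    (hdir.proj g (c • m) : M) = c • (hdir.proj g m : M) := by
  conv_lhs => rw [← Subgroup.mem_centralizer_singleton_iff_conj_eq.1 hc]
  exact hdir.proj_conj_smul hact c g m

open Classical in
theorem DirectSum.IsInternal.proj_smul_of_mem {g : G} {n : M} (hn : n ∈ Mg g) (y : G) :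
    (hdir.proj g (y • n) : M) = if y ∈ Subgroup.centralizer {g} then y • n else 0 := by
  rw [Subgroup.mem_centralizer_singleton_iff_conj_eq]
  split_ifs with hy
  · rw [hdir.proj_of_mem (hy ▸ hact y g n hn)]
  · rw [hdir.proj_of_mem_ne hy (hact y g n hn), Submodule.coe_zero]

variable [SMulCommClass G k M] (g : G)

noncomputable def toInduced : M →ₗ[k] inducedFromCentralizer k M G Mg g :=
  LinearMap.codRestrict _
    (LinearMap.pi fun x ↦ (Mg g).subtype ∘ₗ hdir.proj g ∘ₗ DistribSMul.toLinearMap k M x)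
    fun m ↦ ⟨fun x ↦ (hdir.proj g _).2, fun c hc x ↦ by
      simpa [mul_smul] using hdir.proj_smul_of_mem_centralizer hact hc (x • m)⟩

theorem toInduced_apply (m : M) (x : G) :
    (toInduced hdir hact g m : G → M) x = hdir.proj g (x • m) := rfl

theorem toInduced_smul (h : G) (m : M) (x : G) :
    (toInduced hdir hact g (h • m) : G → M) x =
      (toInduced hdir hact g m : G → M) (x * h) := by
  simp only [toInduced_apply, mul_smul]

variable [Fintype (G ⧸ Subgroup.centralizer {g})]

noncomputable def ofInduced :
    inducedFromCentralizer k M G Mg g →ₗ[k] conjClassPart k M G Mg g :=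
  LinearMap.codRestrict _
    (∑ q : G ⧸ Subgroup.centralizer {g},
      DistribSMul.toLinearMap k M q.out ∘ₗ LinearMap.proj q.out⁻¹ ∘ₗ Submodule.subtype _)
    fun f ↦ by
      simp only [LinearMap.sum_apply, LinearMap.comp_apply]
      exact Submodule.sum_mem _ fun q _ ↦
        le_conjClassPart (isConj_iff.2 ⟨q.out, rfl⟩) (hact _ _ _ (f.2.1 _))

omit [DecidableEq G] in
theorem ofInduced_apply (f : inducedFromCentralizer k M G Mg g) :
    (ofInduced hact g f : M) =
      ∑ q : G ⧸ Subgroup.centralizer {g}, q.out • (f : G → M) q.out⁻¹ := by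
  simp [ofInduced]

theorem ofInduced_toInduced (m : conjClassPart k M G Mg g) :
    ofInduced hact g (toInduced hdir hact g m) = m := by
  ext
  calc (ofInduced hact g (toInduced hdir hact g m) : M)
      = ∑ q : G ⧸ Subgroup.centralizer {g},
          q.out • (hdir.proj g (q.out⁻¹ • (m : M)) : M) := ofInduced_apply hact g _
    _ = ∑ q : G ⧸ Subgroup.centralizer {g}, (hdir.proj (q.out * g * q.out⁻¹) m : M) := by
        simp_rw [← hdir.proj_conj_smul hact, smul_inv_smul]
    _ = m := hdir.sum_proj_conj_out m.2

theorem toInduced_ofInduced (f : inducedFromCentralizer k M G Mg g) :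
    toInduced hdir hact g (ofInduced hact g f) = f := by
  classical
  ext x
  rw [toInduced_apply, ofInduced_apply, Finset.smul_sum, map_sum,
    AddSubmonoidClass.coe_finsetSum]
  -- only the coset `x⁻¹ C` contributes
  simp_rw [← mul_smul, hdir.proj_smul_of_mem hact (f.2.1 _), QuotientGroup.mul_out_mem_iff,
    Finset.sum_ite_eq, Finset.mem_univ, if_true]
  set q : G ⧸ Subgroup.centralizer {g} := QuotientGroup.mk x⁻¹
  have hc : x * q.out ∈ Subgroup.centralizer {g} := (QuotientGroup.mul_out_mem_iff x q).2 rfl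
  rw [← f.2.2 _ hc, mul_inv_cancel_right]

noncomputable def conjClassPartEquivInduced :
    conjClassPart k M G Mg g ≃ₗ[k] inducedFromCentralizer k M G Mg g :=
  LinearEquiv.ofLinearMap ((toInduced hdir hact g).domRestrict _) (ofInduced hact g)
    (LinearMap.ext (toInduced_ofInduced hdir hact g))
    (LinearMap.ext (ofInduced_toInduced hdir hact g))

theorem conjClassPartEquivInduced_apply (m : conjClassPart k M G Mg g) :
    conjClassPartEquivInduced hdir hact g m = toInduced hdir hact g m := rfl

omit hact in
noncomputable def toCentralizerCoinvariants :
    M →ₗ[k] coinvariants k M G (Mg g) (Subgroup.centralizer {g}) :=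
  ∑ q : G ⧸ Subgroup.centralizer {g},
    Submodule.mkQ _ ∘ₗ hdir.proj g ∘ₗ DistribSMul.toLinearMap k M q.out⁻¹

omit hact in
theorem toCentralizerCoinvariants_apply (m : M) :
    toCentralizerCoinvariants hdir g m =
      ∑ q : G ⧸ Subgroup.centralizer {g},
        Submodule.Quotient.mk (hdir.proj g (q.out⁻¹ • m)) := by
  simp [toCentralizerCoinvariants]

theorem toCentralizerCoinvariants_smul (h : G) (m : M) :
    toCentralizerCoinvariants hdir g (h • m) = toCentralizerCoinvariants hdir g m := by
  let F (x : G) : coinvariants k M G (Mg g) (Subgroup.centralizer {g}) :=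
    Submodule.Quotient.mk (hdir.proj g (x⁻¹ • m))
  have hF (x : G) (c : G) (hc : c ∈ Subgroup.centralizer {g}) : F (x * c) = F x := by
    simp only [F, mul_inv_rev, mul_smul]
    exact coinvariants_mk_eq_of_eq_smul (inv_mem hc)
      (hdir.proj_smul_of_mem_centralizer hact (inv_mem hc) _)
  calc toCentralizerCoinvariants hdir g (h • m)
      = ∑ q : G ⧸ Subgroup.centralizer {g}, F (h⁻¹ * q.out) := by
        simp [toCentralizerCoinvariants_apply, F, mul_smul]
    _ = ∑ q : G ⧸ Subgroup.centralizer {g}, F q.out :=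
        QuotientGroup.sum_mul_out_eq_sum_out hF h⁻¹
    _ = toCentralizerCoinvariants hdir g m := (toCentralizerCoinvariants_apply hdir g m).symm

theorem toCentralizerCoinvariants_of_mem {n : M} (hn : n ∈ Mg g) :
    toCentralizerCoinvariants hdir g n = Submodule.Quotient.mk ⟨n, hn⟩ := by
  classical
  have hterm (q : G ⧸ Subgroup.centralizer {g}) :
      (Submodule.Quotient.mk (hdir.proj g (q.out⁻¹ • n)) :
        coinvariants k M G (Mg g) (Subgroup.centralizer {g})) =
      if ((1 : G) : G ⧸ Subgroup.centralizer {g}) = q then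
        Submodule.Quotient.mk ⟨n, hn⟩ else 0 := by
    have hmem :
        q.out⁻¹ ∈ Subgroup.centralizer {g} ↔ ((1 : G) : G ⧸ Subgroup.centralizer {g}) = q := by
      rw [inv_mem_iff, ← inv_one, ← QuotientGroup.mul_out_mem_iff, one_mul]
    have hproj := hdir.proj_smul_of_mem hact hn q.out⁻¹
    rw [hmem] at hproj
    split_ifs at hproj ⊢ with hq
    · exact coinvariants_mk_eq_of_eq_smul (hmem.2 hq) hproj
    · rw [Submodule.coe_eq_zero.1 hproj, Submodule.Quotient.mk_zero]
  simp [toCentralizerCoinvariants_apply, hterm]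

theorem coinvariants_mk_eq_sum_mk_proj (m : conjClassPart k M G Mg g) :
    (Submodule.Quotient.mk m : coinvariants k M G (conjClassPart k M G Mg g) Set.univ) =
      ∑ q : G ⧸ Subgroup.centralizer {g}, Submodule.Quotient.mk
        (Submodule.inclusion (le_conjClassPart (IsConj.refl g))
          (hdir.proj g (q.out⁻¹ • (m : M)))) := by
  have hmem (q : G ⧸ Subgroup.centralizer {g}) :
      q.out • (hdir.proj g (q.out⁻¹ • (m : M)) : M) ∈ conjClassPart k M G Mg g :=
    le_conjClassPart (isConj_iff.2 ⟨q.out, rfl⟩) (hact _ _ _ (Submodule.coe_mem _))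
  have hsum : ofInduced hact g (toInduced hdir hact g m) = ∑ q, ⟨_, hmem q⟩ :=
    Subtype.ext (by simp [ofInduced_apply, toInduced_apply])
  conv_lhs => rw [← ofInduced_toInduced hdir hact g m, hsum, ← Submodule.mkQ_apply, map_sum]
  exact Finset.sum_congr rfl fun q _ ↦ coinvariants_mk_eq_of_eq_smul (Set.mem_univ _) rfl

noncomputable def conjClassPartCoinvariantsEquiv :
    coinvariants k M G (conjClassPart k M G Mg g) Set.univ ≃ₗ[k]
      coinvariants k M G (Mg g) (Subgroup.centralizer {g}) :=
  let hle : Mg g ≤ conjClassPart k M G Mg g := le_conjClassPart (IsConj.refl g)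
  LinearEquiv.ofLinearMap
    (Submodule.liftQ _ (toCentralizerCoinvariants hdir g ∘ₗ Submodule.subtype _) <| by
      refine Submodule.span_le.2 fun _ ⟨h, _, n, hz⟩ ↦ ?_
      simp [hz, toCentralizerCoinvariants_smul hdir hact g])
    (Submodule.mapQ _ _ (Submodule.inclusion hle) <| by
      refine Submodule.span_le.2 fun _ ⟨c, _, n, hz⟩ ↦ ?_
      exact Submodule.subset_span ⟨c, trivial, Submodule.inclusion hle n, hz⟩)
    (Submodule.linearMap_qext _ <| LinearMap.ext fun n ↦ by
      simp [toCentralizerCoinvariants_of_mem hdir hact g n.2])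
    (Submodule.linearMap_qext _ <| LinearMap.ext fun m ↦ by
      simpa [toCentralizerCoinvariants_apply] using
        (coinvariants_mk_eq_sum_mk_proj hdir hact g m).symm)

end Graded

/-- Let `M = ⨁_g M_g` be a `G`-graded module with `h • M_g ⊆ M_{hgh⁻¹}`. For `g ∈ G`
with conjugacy class `O` and centralizer `C_g`, the summand `M_O` is isomorphic as a
`G`-module to `Ind_{C_g}^G M_g` (with `G` acting on the latter by right
translation), and consequently `(M_O)_G ≅ (M_g)_{C_g}`. -/
theorem conjClassPart_iso_induced (Mg : G → Submodule k M)
    (hdir : DirectSum.IsInternal Mg)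
    (hact : ∀ (h g' : G), ∀ m ∈ Mg g', h • m ∈ Mg (h * g' * h⁻¹)) (g : G) :
    (∃ e : conjClassPart k M G Mg g ≃ₗ[k] inducedFromCentralizer k M G Mg g,
      ∀ (h : G) (m m' : conjClassPart k M G Mg g), (m' : M) = h • (m : M) →
        ∀ x : G, (e m' : G → M) x = (e m : G → M) (x * h)) ∧
    Nonempty (coinvariants k M G (conjClassPart k M G Mg g) Set.univ ≃ₗ[k]
      coinvariants k M G (Mg g) (Subgroup.centralizer ({g} : Set G) : Set G)) := by
  classical
  refine ⟨⟨conjClassPartEquivInduced hdir hact g, fun h m m' hm' x ↦ ?_⟩,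
    ⟨conjClassPartCoinvariantsEquiv hdir hact g⟩⟩
  rw [conjClassPartEquivInduced_apply, conjClassPartEquivInduced_apply, hm', toInduced_smul]
end
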